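/- arXiv:2210.12299 — 2 statements merged into one kernel-verified Lean document; each statement's English description precedes it below -/
import Mathlib

section
/- Let I : [a,b] → ℝ be a nonnegative C¹ function satisfying the differential inequality I'(t) ≤ −c·I(t)³ + C for all t ∈ [a,b], where c, C > 0. Then for every t ∈ [a + δ, b] with δ > 0, I(t) ≤ max((2C/c)^{1/3}, (c δ)^{-1/2}); in particular I is bounded on [a+δ, b] by a constant depending only on c, C, δ and not on I(a). -/
/-!
Above the level `K = (2C/c)^{1/3}` the inequality gives `I' ≤ -(c/2) I³`, and at any level
`y ≥ K` the right-hand side `-c y³ + C` is negative, so `I` cannot cross such a level upwards.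
Hence if `I t > K`, then `I ≥ I t > K` on all of `[a, t]`, so there `(I⁻²)' = -2 I' / I³ ≥ c`
and `I(t)⁻² ≥ I(a)⁻² + c (t - a) ≥ c δ`.
-/

open Set

theorem le_of_deriv_neg_at_level {f f' : ℝ → ℝ} {s t y : ℝ} (hst : s ≤ t)
    (hf : ∀ x ∈ Icc s t, HasDerivAt f (f' x) x) (hlevel : ∀ x ∈ Icc s t, f x = y → f' x < 0)
    (hs : f s ≤ y) : f t ≤ y :=
  image_le_of_deriv_right_lt_deriv_boundary'
    (fun x hx => (hf x hx).continuousAt.continuousWithinAt)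
    (fun x hx => (hf x (Ico_subset_Icc_self hx)).hasDerivWithinAt) hs continuousOn_const
    (fun _ _ => hasDerivWithinAt_const _ _ _)
    (fun x hx => hlevel x (Ico_subset_Icc_self hx)) ⟨hst, le_rfl⟩

theorem le_max_of_deriv_le_neg_mul_pow_three_add {I I' : ℝ → ℝ} {c C K s t : ℝ} (hc : 0 ≤ c)
    (hK : 0 ≤ K) (hCK : C < c * K ^ 3) (hst : s ≤ t)
    (hderiv : ∀ x ∈ Icc s t, HasDerivAt I (I' x) x)
    (hineq : ∀ x ∈ Icc s t, I' x ≤ -c * I x ^ 3 + C) : I t ≤ max (I s) K := by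
  refine le_of_deriv_neg_at_level hst hderiv (fun x hx hIx => ?_) (le_max_left _ _)
  have : c * K ^ 3 ≤ c * I x ^ 3 := by
    rw [hIx]
    gcongr
    exact le_max_right _ _
  linarith [hineq x hx]

theorem monotoneOn_inv_sq_sub_mul {I I' : ℝ → ℝ} {k a t : ℝ}
    (hderiv : ∀ x ∈ Icc a t, HasDerivAt I (I' x) x) (hpos : ∀ x ∈ Icc a t, 0 < I x)
    (hineq : ∀ x ∈ Icc a t, I' x ≤ -(k / 2) * I x ^ 3) :
    MonotoneOn (fun x => (I x ^ 2)⁻¹ - k * x) (Icc a t) := by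
  have hF : ∀ x ∈ Icc a t,
      HasDerivAt (fun x => (I x ^ 2)⁻¹ - k * x) (-(2 * I x * I' x) / (I x ^ 2) ^ 2 - k) x := by
    intro x hx
    have hsq : HasDerivAt (fun x => I x ^ 2) (2 * I x * I' x) x := by
      simpa using (hderiv x hx).fun_pow 2
    exact (hsq.inv (pow_pos (hpos x hx) 2).ne').sub (by simpa using (hasDerivAt_id x).const_mul k)
  refine monotoneOn_of_hasDerivWithinAt_nonneg (convex_Icc a t)
    (fun x hx => (hF x hx).continuousAt.continuousWithinAt)
    (fun x hx => (hF x (interior_subset hx)).hasDerivWithinAt) (fun x hx => ?_)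
  have hx := interior_subset hx
  have hIx := hpos x hx
  rw [sub_nonneg, le_div_iff₀ (by positivity)]
  nlinarith [hineq x hx, pow_pos hIx 4]

theorem le_rpow_neg_half_of_le_inv_sq {x y : ℝ} (hx : 0 < x) (hy : 0 < y) (h : y ≤ (x ^ 2)⁻¹) :
    x ≤ y ^ (-(1 : ℝ) / 2) := by
  have : (-(1 : ℝ) / 2) = (-2)⁻¹ := by norm_num
  rw [this, Real.le_rpow_inv_iff_of_neg hx hy (by norm_num), Real.rpow_neg hx.le]
  exact_mod_cast h

theorem rpow_one_div_three_pow_three {x : ℝ} (hx : 0 ≤ x) : (x ^ ((1 : ℝ) / 3)) ^ 3 = x := by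
  have : (1 : ℝ) / 3 = ((3 : ℕ) : ℝ)⁻¹ := by norm_num
  rw [this, Real.rpow_inv_natCast_pow hx (by norm_num)]

theorem riccati_cubic_apriori_bound_general
    (a b c C δ : ℝ) (hc : 0 < c) (hC : 0 < C) (hδ : 0 < δ)
    (I I' : ℝ → ℝ)
    (hderiv : ∀ t ∈ Set.Icc a b, HasDerivAt I (I' t) t)
    (hineq : ∀ t ∈ Set.Icc a b, I' t ≤ -c * (I t) ^ 3 + C) :
    ∀ t ∈ Set.Icc (a + δ) b,
      I t ≤ max ((2 * C / c) ^ ((1 : ℝ) / 3)) ((c * δ) ^ (-(1 : ℝ) / 2)) := by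
  rintro t ⟨hat, htb⟩
  set K := (2 * C / c) ^ ((1 : ℝ) / 3) with hKdef
  have hK : 0 ≤ K := by positivity
  have hcK : c * K ^ 3 = 2 * C := by
    rw [hKdef, rpow_one_div_three_pow_three (by positivity)]
    field_simp
  refine le_max_iff.2 (or_iff_not_imp_left.2 fun hKt => ?_)
  replace hKt := lt_of_not_ge hKt
  have hta : a ≤ t := by linarith
  have hsub : Icc a t ⊆ Icc a b := Icc_subset_Icc_right htb
  have hlarge : ∀ s ∈ Icc a t, K < I s := fun s hs => by
    have := le_max_of_deriv_le_neg_mul_pow_three_add hc.le hK (by linarith) hs.2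
      (fun x hx => hderiv x ⟨hs.1.trans hx.1, hx.2.trans htb⟩)
      (fun x hx => hineq x ⟨hs.1.trans hx.1, hx.2.trans htb⟩)
    exact hKt.trans_le ((le_max_iff.1 this).resolve_right hKt.not_ge)
  have hdecay : ∀ s ∈ Icc a t, I' s ≤ -(c / 2) * I s ^ 3 := fun s hs => by
    have : c * K ^ 3 ≤ c * I s ^ 3 := by gcongr; exact (hlarge s hs).le
    linarith [hineq s (hsub hs)]
  have hpos : ∀ s ∈ Icc a t, 0 < I s := fun s hs => hK.trans_lt (hlarge s hs)
  have hmono := monotoneOn_inv_sq_sub_mul (fun x hx => hderiv x (hsub hx)) hpos hdecay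
    (left_mem_Icc.2 hta) (right_mem_Icc.2 hta) hta
  have hIa : 0 < (I a ^ 2)⁻¹ := by have := hpos a (left_mem_Icc.2 hta); positivity
  refine le_rpow_neg_half_of_le_inv_sq (hpos t (right_mem_Icc.2 hta)) (by positivity) ?_
  calc c * δ ≤ c * (t - a) := by gcongr; linarith
    _ ≤ (I t ^ 2)⁻¹ := by linarith

/-- A priori bound for the Riccati-type differential inequality
I' ≤ −c I³ + C: for t ≥ a + δ, I(t) ≤ max((2C/c)^{1/3}, (cδ)^{−1/2}),
independently of I(a). -/
theorem riccati_cubic_apriori_bound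
    (a b c C δ : ℝ) (hc : 0 < c) (hC : 0 < C) (hδ : 0 < δ)
    (I I' : ℝ → ℝ)
    (hnonneg : ∀ t ∈ Set.Icc a b, 0 ≤ I t)
    (hderiv : ∀ t ∈ Set.Icc a b, HasDerivAt I (I' t) t)
    (hineq : ∀ t ∈ Set.Icc a b, I' t ≤ -c * (I t) ^ 3 + C) :
    ∀ t ∈ Set.Icc (a + δ) b,
      I t ≤ max ((2 * C / c) ^ ((1 : ℝ) / 3)) ((c * δ) ^ (-(1 : ℝ) / 2)) :=
  riccati_cubic_apriori_bound_general a b c C δ hc hC hδ I I' hderiv hineq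
end

section
/- Let I : [a,b] → ℝ be a nonnegative C¹ function satisfying I'(t) ≤ −c·I(t)^{3/2} + C for all t ∈ [a,b], where c, C > 0. Then for every δ > 0 and t ∈ [a+δ, b], I(t) ≤ max((2C/c)^{2/3}, (4/(cδ))²); in particular I is bounded on [a+δ, b] independently of I(a). -/
open Set

/-- A priori bound for the differential inequality I' ≤ −c I^{3/2} + C:
for t ≥ a + δ, I(t) ≤ max((2C/c)^{2/3}, (4/(cδ))²), independently of I(a). -/
theorem riccati_three_halves_apriori_bound
    (a b c C δ : ℝ) (hc : 0 < c) (hC : 0 < C) (hδ : 0 < δ)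
    (I I' : ℝ → ℝ)
    (hnonneg : ∀ t ∈ Set.Icc a b, 0 ≤ I t)
    (hderiv : ∀ t ∈ Set.Icc a b, HasDerivAt I (I' t) t)
    (hineq : ∀ t ∈ Set.Icc a b, I' t ≤ -c * (I t) ^ ((3 : ℝ) / 2) + C) :
    ∀ t ∈ Set.Icc (a + δ) b,
      I t ≤ max ((2 * C / c) ^ ((2 : ℝ) / 3)) ((4 / (c * δ)) ^ 2) := by
  set K : ℝ := (2 * C / c) ^ ((2 : ℝ) / 3) with hKdef
  set M : ℝ := max K ((4 / (c * δ)) ^ 2) with hMdef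
  have h2Cc : (0 : ℝ) < 2 * C / c := by positivity
  have hKM : K ≤ M := le_max_left _ _
  have hM2 : (4 / (c * δ)) ^ 2 ≤ M := le_max_right _ _
  have hMpos : 0 < M := lt_of_lt_of_le (by positivity) hM2
  have hK32 : K ^ ((3 : ℝ) / 2) = 2 * C / c := by
    rw [hKdef, ← Real.rpow_mul h2Cc.le]
    norm_num
  -- key pointwise fact
  have key : ∀ s ∈ Set.Icc a b, M < I s →
      I' s ≤ -(c / 2) * (I s) ^ ((3 : ℝ) / 2) := by
    intro s hs hMs
    have hKs : K ≤ I s := le_of_lt (lt_of_le_of_lt hKM hMs)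
    have hKnn : 0 ≤ K := Real.rpow_nonneg h2Cc.le _
    have h1 : 2 * C / c ≤ (I s) ^ ((3 : ℝ) / 2) := by
      rw [← hK32]
      exact Real.rpow_le_rpow hKnn hKs (by norm_num)
    have hCle : C ≤ c / 2 * (I s) ^ ((3 : ℝ) / 2) := by
      have h2 := mul_le_mul_of_nonneg_left h1 (le_of_lt (half_pos hc))
      have h3 : c / 2 * (2 * C / c) = C := by field_simp
      linarith
    have h4 := hineq s hs
    linarith
  -- no-escape lemma: once below M, stays below M
  have noesc : ∀ s₀ ∈ Set.Icc a b, ∀ s₁ ∈ Set.Icc a b, s₀ ≤ s₁ →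
      I s₀ ≤ M → I s₁ ≤ M := by
    intro s₀ hs₀ s₁ hs₁ h01 h0M
    by_contra h1M
    push_neg at h1M
    set S : Set ℝ := Set.Icc s₀ s₁ ∩ I ⁻¹' Set.Iic M with hSdef
    have hsub : Set.Icc s₀ s₁ ⊆ Set.Icc a b := Set.Icc_subset_Icc hs₀.1 hs₁.2
    have hScl : IsClosed S := by
      have hcont : ContinuousOn I (Set.Icc s₀ s₁) := fun x hx =>
        ((hderiv x (hsub hx)).continuousAt).continuousWithinAt
      exact hcont.preimage_isClosed_of_isClosed isClosed_Icc isClosed_Iic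
    have hne : S.Nonempty := ⟨s₀, ⟨le_refl _, h01⟩, h0M⟩
    have hbdd : BddAbove S := ⟨s₁, fun x hx => hx.1.2⟩
    set r := sSup S with hrdef
    have hrS : r ∈ S := hScl.csSup_mem hne hbdd
    have hr0 : s₀ ≤ r := hrS.1.1
    have hr1 : r ≤ s₁ := hrS.1.2
    have hrI : I r ≤ M := hrS.2
    have hgt : ∀ s, r < s → s ≤ s₁ → M < I s := by
      intro s hrs hss
      by_contra h
      push_neg at h
      have hsS : s ∈ S := ⟨⟨hr0.trans hrs.le, hss⟩, h⟩
      exact absurd (le_csSup hbdd hsS) (not_le.2 hrs)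
    have hsub2 : Set.Icc r s₁ ⊆ Set.Icc a b :=
      Set.Icc_subset_Icc (hs₀.1.trans hr0) hs₁.2
    have hanti : AntitoneOn I (Set.Icc r s₁) := by
      apply antitoneOn_of_deriv_nonpos (convex_Icc _ _)
      · exact fun x hx => ((hderiv x (hsub2 hx)).continuousAt).continuousWithinAt
      · rw [interior_Icc]
        exact fun x hx =>
          ((hderiv x (hsub2 (Set.Ioo_subset_Icc_self hx))).differentiableAt).differentiableWithinAt
      · rw [interior_Icc]
        intro x hx
        have hxab := hsub2 (Set.Ioo_subset_Icc_self hx)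
        rw [(hderiv x hxab).deriv]
        have hMx : M < I x := hgt x hx.1 hx.2.le
        have hkx := key x hxab hMx
        have hxpos : 0 < I x := hMpos.trans hMx
        nlinarith [Real.rpow_pos_of_pos hxpos ((3 : ℝ) / 2), half_pos hc,
          mul_pos (half_pos hc) (Real.rpow_pos_of_pos hxpos ((3 : ℝ) / 2))]
    have hfin := hanti ⟨le_refl r, hr1⟩ ⟨hr1, le_refl s₁⟩ hr1
    linarith
  -- main argument
  intro t ht
  by_contra htM
  push_neg at htM
  have ht_ab : t ∈ Set.Icc a b := ⟨by linarith [ht.1], ht.2⟩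
  have hall : ∀ s ∈ Set.Icc (t - δ) t, M < I s := by
    intro s hs
    have hs_ab : s ∈ Set.Icc a b := ⟨by linarith [hs.1, ht.1], hs.2.trans ht.2⟩
    by_contra h
    push_neg at h
    exact absurd (noesc s hs_ab t ht_ab hs.2 h) (not_le.2 htM)
  set J : ℝ → ℝ := fun s => (I s) ^ (-(1 : ℝ) / 2) with hJdef
  have hsub3 : Set.Icc (t - δ) t ⊆ Set.Icc a b := fun s hs =>
    ⟨by linarith [hs.1, ht.1], hs.2.trans ht.2⟩
  have hJderiv : ∀ s ∈ Set.Icc (t - δ) t,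
      HasDerivAt J (I' s * (-(1 : ℝ) / 2) * (I s) ^ (-(1 : ℝ) / 2 - 1)) s := by
    intro s hs
    have hspos : 0 < I s := hMpos.trans (hall s hs)
    exact (hderiv s (hsub3 hs)).rpow_const (Or.inl (ne_of_gt hspos))
  have hJ' : ∀ s ∈ interior (Set.Icc (t - δ) t), c / 4 ≤ deriv J s := by
    rw [interior_Icc]
    intro s hs
    have hsIcc : s ∈ Set.Icc (t - δ) t := Set.Ioo_subset_Icc_self hs
    have hspos : 0 < I s := hMpos.trans (hall s hsIcc)
    rw [(hJderiv s hsIcc).deriv]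
    have hkey := key s (hsub3 hsIcc) (hall s hsIcc)
    set p := (I s) ^ ((3 : ℝ) / 2) with hpdef
    set q := (I s) ^ (-(1 : ℝ) / 2 - 1) with hqdef
    have hq : 0 < q := Real.rpow_pos_of_pos hspos _
    have hpq : p * q = 1 := by
      rw [hpdef, hqdef, ← Real.rpow_add hspos]
      norm_num
    have h1 := mul_le_mul_of_nonneg_right hkey hq.le
    nlinarith [h1, hpq]
  have hcontJ : ContinuousOn J (Set.Icc (t - δ) t) := fun s hs =>
    ((hJderiv s hs).continuousAt).continuousWithinAt
  have hdiffJ : DifferentiableOn ℝ J (interior (Set.Icc (t - δ) t)) := by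
    rw [interior_Icc]
    exact fun s hs =>
      ((hJderiv s (Set.Ioo_subset_Icc_self hs)).differentiableAt).differentiableWithinAt
  have hmvt := (convex_Icc (t - δ) t).mul_sub_le_image_sub_of_le_deriv hcontJ hdiffJ hJ'
    (t - δ) ⟨le_refl _, by linarith⟩ t ⟨by linarith, le_refl _⟩ (by linarith)
  have hJtd : 0 ≤ J (t - δ) :=
    Real.rpow_nonneg (hnonneg _ (hsub3 ⟨le_refl _, by linarith⟩)) _
  have hJt : c / 4 * δ ≤ J t := by
    have : t - (t - δ) = δ := by ring
    rw [this] at hmvt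
    linarith
  -- conclude
  have hxpos : 0 < I t := hMpos.trans htM
  set u := (I t) ^ ((1 : ℝ) / 2) with hudef
  have hu : 0 < u := Real.rpow_pos_of_pos hxpos _
  have huJ : u * J t = 1 := by
    rw [hudef, hJdef, ← Real.rpow_add hxpos]
    norm_num
  have h4 : u * (c / 4 * δ) ≤ 1 := by
    calc u * (c / 4 * δ) ≤ u * J t := mul_le_mul_of_nonneg_left hJt hu.le
    _ = 1 := huJ
  have hu4 : u ≤ 4 / (c * δ) := by
    rw [le_div_iff₀ (by positivity : 0 < c * δ)]
    nlinarith
  have hx2 : u ^ (2 : ℕ) = I t := by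
    rw [hudef, ← Real.rpow_natCast ((I t) ^ ((1 : ℝ) / 2)) 2,
      ← Real.rpow_mul hxpos.le]
    norm_num
  have hfinal : I t ≤ (4 / (c * δ)) ^ 2 := by
    rw [← hx2]
    exact pow_le_pow_left₀ hu.le hu4 2
  linarith
end
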